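/- arXiv:2404.10729 — 2 statements merged into one kernel-verified Lean document; each statement's English description precedes it below -/
import Mathlib

section
/- (Simplification of tableaux) Let a be a partition of [n] and let T = (P_{A_1},...,P_{A_ℓ}) be a sequence of valid columns for the matching field of a, where column u has entries (i_u, j_u, k_u) with k_u = max(A_u) and block indices (I_u, J_u, K_u). Then there exists a sequence of valid columns T' = (P_{A'_1},...,P_{A'_ℓ}) with the same multiset of entries in each of the three rows as T, such that I'_1 ≤ I'_2 ≤ ... ≤ I'_ℓ and k'_1 ≤ k'_2 ≤ ... ≤ k'_ℓ. -/
/-- `(i, j, k)` is a valid column for the matching field of the partition with block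
function `β` (a monotone surjection `Fin n → Fin r` whose fibers are the consecutive
blocks) if it is the matching field ordering of the 3-subset `{i,j,k}`: either
`i < j < k` with `i` and `j` in the same block, or `j < i < k` with the block of `j`
different from (hence, by monotonicity, strictly before) the block of `i`. -/
def ValidCol {n r : ℕ} (β : Fin n → Fin r) (i j k : Fin n) : Prop :=
  (i < j ∧ j < k ∧ β i = β j) ∨ (j < i ∧ i < k ∧ β j ≠ β i)

/-!
Validity of a column `(i, j, k)` splits into a condition on the pair `(i, j)` and the
inequality `max i j < k`. Hence the pairs `(i, j)` and the third-row entries can be sorted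
independently: sorting the pairs by `max i j` also sorts them by the block of `i`, and the
pairs sorted by `max i j`, matched with the sorted third row, still satisfy `max i j < k`
by a counting argument.
-/

theorem Monotone.lt_of_lt_comp_perm {α : Type*} [LinearOrder α] {ℓ : ℕ} {f g : Fin ℓ → α}
    (hf : Monotone f) (hg : Monotone g) (σ : Equiv.Perm (Fin ℓ))
    (h : ∀ u, f u < g (σ u)) (m : Fin ℓ) : f m < g m := by
  by_contra! hgf
  have hmaps : Set.MapsTo σ (Finset.Ici m : Set (Fin ℓ)) (Finset.Ioi m : Set (Fin ℓ)) := by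
    intro u hu
    simp only [Finset.coe_Ici, Finset.coe_Ioi, Set.mem_Ici, Set.mem_Ioi] at hu ⊢
    exact hg.reflect_lt (hgf.trans_lt ((hf hu).trans_lt (h u)))
  have hcard := Finset.card_le_card_of_injOn σ hmaps σ.injective.injOn
  rw [Fin.card_Ici, Fin.card_Ioi] at hcard
  omega

theorem Multiset.map_univ_val_comp_equiv {α β γ : Type*} [Fintype α] [Fintype γ]
    (f : α → β) (e : γ ≃ α) :
    Multiset.map (f ∘ e) Finset.univ.val = Multiset.map f Finset.univ.val := by
  rw [← Multiset.map_map, Multiset.map_univ_val_equiv]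

namespace ValidCol

variable {n r : ℕ} {β : Fin n → Fin r} {i j k : Fin n}

theorem max_lt (h : ValidCol β i j k) : max i j < k := by
  rcases h with ⟨hij, hjk, -⟩ | ⟨hji, hik, -⟩
  · exact _root_.max_lt (hij.trans hjk) hjk
  · exact _root_.max_lt hik (hji.trans hik)

theorem of_max_lt (h : ValidCol β i j k) {k' : Fin n} (hk' : max i j < k') :
    ValidCol β i j k' := by
  rcases h with ⟨hij, -, hb⟩ | ⟨hji, -, hb⟩
  · exact Or.inl ⟨hij, (le_max_right i j).trans_lt hk', hb⟩
  · exact Or.inr ⟨hji, (le_max_left i j).trans_lt hk', hb⟩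

theorem block_le_of_max_le (hβ : Monotone β) (h : ValidCol β i j k) {i₀ j₀ : Fin n}
    (hmax : max i₀ j₀ ≤ max i j) : β i₀ ≤ β i := by
  by_contra! hlt
  have hi : i < i₀ := hβ.reflect_lt hlt
  have hmax_lt : max i j < i₀ := by
    rcases h with ⟨hij, -, hb⟩ | ⟨hji, -, -⟩
    · exact _root_.max_lt hi (hβ.reflect_lt (hb ▸ hlt))
    · exact _root_.max_lt hi (hji.trans hi)
  exact (hmax.trans_lt hmax_lt).not_ge (le_max_left i₀ j₀)

end ValidCol

theorem stmt_10_general (n r ℓ : ℕ) (β : Fin n → Fin r)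
    (hmono : Monotone β)
    (i j k : Fin ℓ → Fin n)
    (hvalid : ∀ u, ValidCol β (i u) (j u) (k u)) :
    ∃ i' j' k' : Fin ℓ → Fin n,
      (∀ u, ValidCol β (i' u) (j' u) (k' u)) ∧
      Monotone (fun u => β (i' u)) ∧
      Monotone k' ∧
      Multiset.map i' Finset.univ.val = Multiset.map i Finset.univ.val ∧
      Multiset.map j' Finset.univ.val = Multiset.map j Finset.univ.val ∧
      Multiset.map k' Finset.univ.val = Multiset.map k Finset.univ.val := by
  set σ := Tuple.sort fun u => max (i u) (j u)
  set τ := Tuple.sort k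
  have hmax : Monotone fun u => max (i (σ u)) (j (σ u)) :=
    Tuple.monotone_sort fun u => max (i u) (j u)
  have hk : Monotone (k ∘ τ) := Tuple.monotone_sort k
  have hlt : ∀ u, max (i (σ u)) (j (σ u)) < k (τ u) :=
    hmax.lt_of_lt_comp_perm hk (σ.trans τ.symm) fun u => by
      simpa using (hvalid (σ u)).max_lt
  exact ⟨i ∘ σ, j ∘ σ, k ∘ τ, fun u => (hvalid (σ u)).of_max_lt (hlt u),
    fun _ v huv => (hvalid (σ v)).block_le_of_max_le hmono (hmax huv), hk,
    Multiset.map_univ_val_comp_equiv i σ, Multiset.map_univ_val_comp_equiv j σ,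
    Multiset.map_univ_val_comp_equiv k τ⟩

/-- (Simplification of tableaux.)  Given a tableau `T` with `ℓ` valid columns
`(i_u, j_u, k_u)`, there is a tableau `T'` of valid columns `(i'_u, j'_u, k'_u)` with the
same multiset of entries in each of the three rows as `T`, such that the block indices
`β (i'_u)` of the first row are weakly increasing, and the third-row entries `k'_u`
(automatically the maxima of the columns) are weakly increasing. -/
theorem stmt_10 (n r ℓ : ℕ) (β : Fin n → Fin r)
    (hmono : Monotone β) (hsurj : Function.Surjective β)
    (i j k : Fin ℓ → Fin n)
    (hvalid : ∀ u, ValidCol β (i u) (j u) (k u)) :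
    ∃ i' j' k' : Fin ℓ → Fin n,
      (∀ u, ValidCol β (i' u) (j' u) (k' u)) ∧
      Monotone (fun u => β (i' u)) ∧
      Monotone k' ∧
      Multiset.map i' Finset.univ.val = Multiset.map i Finset.univ.val ∧
      Multiset.map j' Finset.univ.val = Multiset.map j Finset.univ.val ∧
      Multiset.map k' Finset.univ.val = Multiset.map k Finset.univ.val :=
  stmt_10_general n r ℓ β hmono i j k hvalid
end

section
/- Let I be a monomial ideal in K[x_1,...,x_n] with linear quotients with respect to m_1,...,m_k, with decomposition function b (sending a monomial m ∈ I to the generator m_j with j minimal such that m ∈ (m_1,...,m_j)). If b is regular, i.e. set(b(x_t · m)) ⊆ set(m) for each generator m and each variable x_t ∈ set(m), then b satisfies the exchange property: for each generator m and all x_s, x_t ∈ set(m), b(x_s · b(x_t · m)) = b(x_t · b(x_s · m)), where b(x_u · m') is interpreted as m' whenever x_u ∉ set(m'). -/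
open MvPolynomial

/-- Linear quotients for an ordered list of generators: each colon ideal of the span of
the earlier generators by a later generator is generated by a subset of the variables. -/
def LinQuot {σ : Type} {K : Type} [Field K] (L : List (MvPolynomial σ K)) : Prop :=
  ∀ j : Fin L.length, ∃ S : Set σ,
    (Ideal.span {m | m ∈ L.take j.val}).colon (Ideal.span {L.get j}) =
      Ideal.span ((fun s => (X s : MvPolynomial σ K)) '' S)

/-- `set(m_j)`: the set of variables `x_s` with `x_s · m_j ∈ (m_1,…,m_{j-1})`.  When the
list has linear quotients, these variables generate the colon ideal
`(m_1,…,m_{j-1}) : m_j`. -/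
def SetOf {σ : Type} {K : Type} [Field K] (L : List (MvPolynomial σ K))
    (j : Fin L.length) : Set σ :=
  {s | (X s : MvPolynomial σ K) * L.get j ∈ Ideal.span {m | m ∈ L.take j.val}}

/-! The exchange property reduces to the symmetric identity
`b(x_s · b(x_t · m)) = b(x_s x_t · m)`. Let `m_q = b(x_t m)`, `m_a = b(x_s m_q)` and
`m_c = b(x_s x_t m)`; clearly `c ≤ a ≤ q`. If `c < a`, linear quotients at `m_q` put a variable
dividing `x_s · (x_t m / m_q)` into `set(m_q)`. By the minimality of `q` no variable of `set(m_q)`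
divides `x_t m / m_q`, so it is `x_s`, and regularity gives `set(m_a) ⊆ set(m_q)`.
Linear quotients at `m_a` then produce a variable of `set(m_a)` dividing
`(x_s m_q / m_a) · (x_t m / m_q)`; by the minimality of `a` it divides `x_t m / m_q`, and it
lies in `set(m_q)`: a contradiction. -/

open Finsupp (single)

section CommSemiring

variable {σ R : Type*} [CommSemiring R] {L : List (MvPolynomial σ R)}
  {d : Fin L.length → σ →₀ ℕ}

/-- `L.take (j + 1)` lists `m_1, …, m_j`: generators are indexed from `0`. -/
def IsDecompositionFun (L : List (MvPolynomial σ R))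
    (b : MvPolynomial σ R → MvPolynomial σ R) : Prop :=
  ∀ m : MvPolynomial σ R, (∃ e : σ →₀ ℕ, m = monomial e 1) →
    m ∈ Ideal.span {u | u ∈ L} →
    ∃ j : Fin L.length, b m = L.get j ∧ m ∈ Ideal.span {u | u ∈ L.take (j.val + 1)} ∧
      ∀ j' < j.val, m ∉ Ideal.span {u | u ∈ L.take (j' + 1)}

theorem X_mul_monomial_one (s : σ) (e : σ →₀ ℕ) :
    (X s : MvPolynomial σ R) * monomial e 1 = monomial (single s 1 + e) 1 := by
  rw [monomial_single_add, pow_one]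

theorem List.mem_take_iff_exists_get {α : Type*} {l : List α} {v : ℕ} {a : α} :
    a ∈ l.take v ↔ ∃ j : Fin l.length, j.val < v ∧ l.get j = a := by
  rw [List.mem_take_iff_getElem]
  constructor
  · rintro ⟨i, hi, rfl⟩
    exact ⟨⟨i, (lt_min_iff.1 hi).2⟩, (lt_min_iff.1 hi).1, rfl⟩
  · rintro ⟨j, hjv, rfl⟩
    exact ⟨j.val, lt_min_iff.2 ⟨hjv, j.isLt⟩, rfl⟩

variable [Nontrivial R]

theorem monomial_mem_span_take_iff (hd : ∀ j, L.get j = monomial (d j) 1) (v : ℕ)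
    (e : σ →₀ ℕ) :
    monomial e (1 : R) ∈ Ideal.span {u | u ∈ L.take v} ↔
      ∃ j : Fin L.length, j.val < v ∧ d j ≤ e := by
  have hset : {u | u ∈ L.take v} = (fun f => monomial f (1 : R)) '' (d '' {j | j.val < v}) := by
    ext u
    simp only [Set.mem_ofPred_eq, List.mem_take_iff_exists_get, Set.image_image, hd,
      Set.mem_image]
  classical
  rw [hset, mem_ideal_span_monomial_image, support_monomial, if_neg one_ne_zero]
  simp

theorem IsDecompositionFun.exists_isLeast {b : MvPolynomial σ R → MvPolynomial σ R}
    (hb : IsDecompositionFun L b) (hd : ∀ j, L.get j = monomial (d j) 1) {e : σ →₀ ℕ}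
    (he : ∃ i, d i ≤ e) :
    ∃ j, b (monomial e 1) = L.get j ∧ IsLeast {i | d i ≤ e} j := by
  have hmem : monomial e (1 : R) ∈ Ideal.span {u | u ∈ L} := by
    obtain ⟨i, hi⟩ := he
    simpa only [L.take_length] using
      (monomial_mem_span_take_iff hd L.length e).2 ⟨i, i.isLt, hi⟩
  obtain ⟨j, hbj, hj, hmin⟩ := hb _ ⟨e, rfl⟩ hmem
  have hbelow : ∀ i : Fin L.length, d i ≤ e → j ≤ i := fun i hi =>
    not_lt.1 fun hij =>
      hmin i hij ((monomial_mem_span_take_iff hd _ _).2 ⟨i, i.val.lt_succ_self, hi⟩)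
  obtain ⟨i, hi, hie⟩ := (monomial_mem_span_take_iff hd _ _).1 hj
  have hij : i = j := le_antisymm (Nat.lt_succ_iff.1 hi) (hbelow i hie)
  exact ⟨j, hbj, hij ▸ hie, hbelow⟩

end CommSemiring

section Field

variable {σ K : Type} [Field K] {L : List (MvPolynomial σ K)} {d : Fin L.length → σ →₀ ℕ}

def IsRegularDecompositionFun (L : List (MvPolynomial σ K))
    (b : MvPolynomial σ K → MvPolynomial σ K) : Prop :=
  ∀ (p : Fin L.length) (s : σ), s ∈ SetOf L p →
    ∀ q : Fin L.length, b (X s * L.get p) = L.get q → SetOf L q ⊆ SetOf L p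

theorem mem_setOf_iff (hd : ∀ j, L.get j = monomial (d j) 1) {q : Fin L.length} {u : σ} :
    u ∈ SetOf L q ↔ ∃ j : Fin L.length, j < q ∧ d j ≤ single u 1 + d q := by
  rw [SetOf, Set.mem_ofPred, hd q, X_mul_monomial_one, monomial_mem_span_take_iff hd]
  rfl

theorem apply_eq_zero_of_mem_setOf (hd : ∀ j, L.get j = monomial (d j) 1) {q : Fin L.length}
    {f : σ →₀ ℕ} (hq : IsLeast {i | d i ≤ f + d q} q) {u : σ} (hu : u ∈ SetOf L q) :
    f u = 0 := by
  by_contra hfu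
  obtain ⟨j, hjq, hj⟩ := (mem_setOf_iff hd).1 hu
  have hle : single u 1 ≤ f := by rwa [Finsupp.single_le_iff, Nat.one_le_iff_ne_zero]
  exact not_le.2 hjq (hq.2 (hj.trans (add_le_add hle le_rfl)))

theorem exists_mem_setOf_apply_ne_zero (hd : ∀ j, L.get j = monomial (d j) 1) (hlq : LinQuot L)
    {c q : Fin L.length} (hcq : c < q) {f : σ →₀ ℕ} (hc : d c ≤ f + d q) :
    ∃ u ∈ SetOf L q, f u ≠ 0 := by
  classical
  obtain ⟨S, hS⟩ := hlq q
  have hcolon : monomial f (1 : K) ∈ (Ideal.span {m | m ∈ L.take q.val}).colon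
      (Ideal.span {L.get q}) := by
    rw [Ideal.mem_colon_span_singleton, hd q, monomial_mul, one_mul,
      monomial_mem_span_take_iff hd]
    exact ⟨c, hcq, hc⟩
  rw [hS, mem_ideal_span_X_image, support_monomial, if_neg one_ne_zero] at hcolon
  obtain ⟨u, huS, hfu⟩ := hcolon f (Finset.mem_singleton_self f)
  have hXu : (X u : MvPolynomial σ K) ∈ Ideal.span ((fun s => (X s : MvPolynomial σ K)) '' S) :=
    Ideal.subset_span ⟨u, huS, rfl⟩
  rw [← hS, Ideal.mem_colon_span_singleton] at hXu
  exact ⟨u, hXu, hfu⟩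

theorem exists_mem_setOf_of_isLeast (hd : ∀ j, L.get j = monomial (d j) 1) (hlq : LinQuot L)
    {c q : Fin L.length} {f g : σ →₀ ℕ} (hq : IsLeast {i | d i ≤ f + d q} q) (hcq : c < q)
    (hc : d c ≤ g + f + d q) : ∃ u ∈ SetOf L q, g u ≠ 0 := by
  obtain ⟨u, huq, hu⟩ := exists_mem_setOf_apply_ne_zero hd hlq hcq hc
  refine ⟨u, huq, ?_⟩
  rwa [Finsupp.add_apply, apply_eq_zero_of_mem_setOf hd hq huq, add_zero] at hu

theorem eq_of_isLeast_single_add (hd : ∀ j, L.get j = monomial (d j) 1) (hlq : LinQuot L)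
    {a c q : Fin L.length} {s : σ} {e : σ →₀ ℕ} (hq : IsLeast {i | d i ≤ e} q)
    (ha : IsLeast {i | d i ≤ single s 1 + d q} a) (hc : IsLeast {i | d i ≤ single s 1 + e} c)
    (hreg : s ∈ SetOf L q → SetOf L a ⊆ SetOf L q) : a = c := by
  have hc_le : c ≤ a :=
    hc.2 <| show d a ≤ single s 1 + e from ha.1.trans (add_le_add le_rfl hq.1)
  refine le_antisymm (not_lt.1 fun hca => ?_) hc_le
  have haq : a ≤ q := ha.2 (le_add_self : d q ≤ single s 1 + d q)
  obtain ⟨w, rfl⟩ : ∃ w, e = d q + w := exists_add_of_le hq.1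
  rw [add_comm] at hq
  obtain ⟨v, hv⟩ : ∃ v, single s 1 + d q = d a + v := exists_add_of_le ha.1
  rw [hv, add_comm] at ha
  obtain ⟨u, huq, hu⟩ := exists_mem_setOf_of_isLeast hd hlq hq (hca.trans_le haq)
    (f := w) (g := single s 1) (by rw [add_assoc, add_comm w]; exact hc.1)
  obtain rfl : u = s := (Finsupp.single_apply_ne_zero.1 hu).1
  obtain ⟨u', hu'a, hu'⟩ := exists_mem_setOf_of_isLeast hd hlq ha hca (g := w)
    (by rw [add_assoc, add_comm v, ← hv, add_left_comm, add_comm w]; exact hc.1)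
  exact hu' (apply_eq_zero_of_mem_setOf hd hq (hreg huq hu'a))

theorem IsDecompositionFun.apply_X_mul_apply_X_mul {b : MvPolynomial σ K → MvPolynomial σ K}
    (hb : IsDecompositionFun L b) (hreg : IsRegularDecompositionFun L b)
    (hd : ∀ j, L.get j = monomial (d j) 1) (hlq : LinQuot L) {p : Fin L.length} {s t : σ}
    (ht : t ∈ SetOf L p) :
    b (X s * b (X t * L.get p)) = b (monomial (single s 1 + (single t 1 + d p)) 1) := by
  obtain ⟨i, -, hi⟩ := (mem_setOf_iff hd).1 ht
  obtain ⟨q, hbq, hq⟩ := hb.exists_isLeast hd ⟨i, hi⟩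
  obtain ⟨a, hba, ha⟩ := hb.exists_isLeast hd
    ⟨q, (le_add_self : d q ≤ single s 1 + d q)⟩
  obtain ⟨c, hbc, hc⟩ := hb.exists_isLeast hd
    ⟨q, hq.1.trans (le_add_self : _ ≤ single s 1 + _)⟩
  rw [hd p, X_mul_monomial_one, hbq, hd q, X_mul_monomial_one, hba, hbc]
  rw [← X_mul_monomial_one, ← hd q] at hba
  exact congrArg L.get (eq_of_isLeast_single_add hd hlq hq ha hc fun hs => hreg q s hs a hba)

end Field

theorem stmt_19_general (K : Type) [Field K] (n : ℕ)
    (L : List (MvPolynomial (Fin n) K))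
    (hmon : ∀ u ∈ L, ∃ d : Fin n →₀ ℕ, u = monomial d 1)
    (hlq : LinQuot L)
    (b : MvPolynomial (Fin n) K → MvPolynomial (Fin n) K)
    (hb : ∀ m : MvPolynomial (Fin n) K, (∃ d : Fin n →₀ ℕ, m = monomial d 1) →
      m ∈ Ideal.span {u | u ∈ L} →
      ∃ j : Fin L.length, b m = L.get j ∧
        m ∈ Ideal.span {u | u ∈ L.take (j.val + 1)} ∧
        ∀ j' < j.val, m ∉ Ideal.span {u | u ∈ L.take (j' + 1)})
    (hreg : ∀ (p : Fin L.length) (s : Fin n), s ∈ SetOf L p →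
      ∀ q : Fin L.length, b (X s * L.get p) = L.get q → SetOf L q ⊆ SetOf L p) :
    ∀ (p : Fin L.length) (s t : Fin n), s ∈ SetOf L p → t ∈ SetOf L p →
      b (X s * b (X t * L.get p)) = b (X t * b (X s * L.get p)) := by
  choose d hd using fun j : Fin L.length => hmon _ (L.get_mem j)
  have hb' : IsDecompositionFun L b := hb
  intro p s t hs ht
  rw [hb'.apply_X_mul_apply_X_mul hreg hd hlq ht, hb'.apply_X_mul_apply_X_mul hreg hd hlq hs,
    add_left_comm]

/-- Let `I ⊆ K[x_1,…,x_n]` be a monomial ideal with linear quotients with respect to the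
minimal monomial generators `m_1,…,m_k`, and let `b` be the decomposition function:
for every monomial `m ∈ I`, `b m` is the generator `m_j` with `j` minimal such that
`m ∈ (m_1,…,m_j)` (so in particular `b (x_u · m') = m'` for a generator `m'` when
`x_u ∉ set(m')`).  If `b` is regular, i.e. `set(b(x_t · m)) ⊆ set(m)` for every
generator `m` and every variable `x_t ∈ set(m)`, then `b` satisfies the exchange
property: `b(x_s · b(x_t · m)) = b(x_t · b(x_s · m))` for all `x_s, x_t ∈ set(m)`. -/
theorem stmt_19 (K : Type) [Field K] (n : ℕ)
    (L : List (MvPolynomial (Fin n) K))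
    (hmon : ∀ u ∈ L, ∃ d : Fin n →₀ ℕ, u = monomial d 1)
    (hnd : L.Nodup)
    (hmin : ∀ u ∈ L, ∀ u' ∈ L, u ≠ u' → ¬ u ∣ u')
    (hlq : LinQuot L)
    (b : MvPolynomial (Fin n) K → MvPolynomial (Fin n) K)
    (hb : ∀ m : MvPolynomial (Fin n) K, (∃ d : Fin n →₀ ℕ, m = monomial d 1) →
      m ∈ Ideal.span {u | u ∈ L} →
      ∃ j : Fin L.length, b m = L.get j ∧
        m ∈ Ideal.span {u | u ∈ L.take (j.val + 1)} ∧
        ∀ j' < j.val, m ∉ Ideal.span {u | u ∈ L.take (j' + 1)})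
    (hreg : ∀ (p : Fin L.length) (s : Fin n), s ∈ SetOf L p →
      ∀ q : Fin L.length, b (X s * L.get p) = L.get q → SetOf L q ⊆ SetOf L p) :
    ∀ (p : Fin L.length) (s t : Fin n), s ∈ SetOf L p → t ∈ SetOf L p →
      b (X s * b (X t * L.get p)) = b (X t * b (X s * L.get p)) :=
  stmt_19_general K n L hmon hlq b hb hreg
end
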